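/- arXiv:2010.15268 — 4 statements merged into one kernel-verified Lean document; each statement's English description precedes it below -/
import Mathlib

section
/- (Oscillating counterexample: API has no fixed point.) Define T : [0,1] → ℝ by T(ρ) = 1 if 1 + ρ > 3ρ and T(ρ) = 0 otherwise. Then T(ρ) = 1 if and only if ρ < 1/2; in particular T(0) = 1, T(1) = 0, T maps [0,1] into {0,1}, there is no ρ ∈ [0,1] with T(ρ) = ρ, and T swaps 0 and 1, so iterating T from any starting point in [0,1] oscillates forever between the values 0 and 1. -/
/-- One round of approximate policy iteration on the oscillating counterexample:
given the current policy's probability ρ of the right action, the evaluation step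
produces θ* = (2ρ, 3ρ, 1+ρ) and greedification compares the look-ahead value
1+ρ of the right action against 3ρ for the left action (ties broken left);
the output is the new probability of the right action (1 = right, 0 = left). -/
noncomputable def oscAPI (ρ : ℝ) : ℝ := if 1 + ρ > 3 * ρ then 1 else 0

lemma oscAPI_eq_one_iff (ρ : ℝ) : oscAPI ρ = 1 ↔ ρ < 1/2 := by
  unfold oscAPI
  split_ifs with h
  · constructor <;> intro _ <;> [linarith; rfl]
  · constructor <;> intro h' <;> [norm_num at h'; linarith]

lemma oscAPI_zero : oscAPI 0 = 1 := by simp [oscAPI]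
lemma oscAPI_one : oscAPI 1 = 0 := by norm_num [oscAPI]

lemma oscAPI_mem (ρ : ℝ) : oscAPI ρ = 0 ∨ oscAPI ρ = 1 := by
  unfold oscAPI; split_ifs <;> simp

lemma oscAPI_swap {x : ℝ} (h : x = 0 ∨ x = 1) :
    oscAPI x ≠ x ∧ (oscAPI x = 0 ∨ oscAPI x = 1) := by
  rcases h with h | h <;> subst h <;>
    simp [oscAPI_zero, oscAPI_one]

theorem osc_no_fixed_point :
    (∀ ρ ∈ Set.Icc (0:ℝ) 1, (oscAPI ρ = 1 ↔ ρ < 1/2)) ∧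
    oscAPI 0 = 1 ∧ oscAPI 1 = 0 ∧
    (∀ ρ ∈ Set.Icc (0:ℝ) 1, oscAPI ρ = 0 ∨ oscAPI ρ = 1) ∧
    (¬ ∃ ρ ∈ Set.Icc (0:ℝ) 1, oscAPI ρ = ρ) ∧
    (∀ ρ ∈ Set.Icc (0:ℝ) 1, ∀ n : ℕ,
      (oscAPI^[n+1] ρ = 0 ∨ oscAPI^[n+1] ρ = 1) ∧
      oscAPI^[n+2] ρ ≠ oscAPI^[n+1] ρ) := by
  refine ⟨fun ρ _ => oscAPI_eq_one_iff ρ, oscAPI_zero, oscAPI_one,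
    fun ρ _ => oscAPI_mem ρ, ?_, ?_⟩
  · rintro ⟨ρ, ⟨h0, h1⟩, hfix⟩
    rcases oscAPI_mem ρ with h | h
    · have : ρ = 0 := hfix.symm.trans h
      subst this
      rw [oscAPI_zero] at h; norm_num at h
    · have : ρ = 1 := hfix.symm.trans h
      subst this
      rw [oscAPI_one] at h; norm_num at h
  · intro ρ _ n
    have key : ∀ m : ℕ, oscAPI^[m+1] ρ = 0 ∨ oscAPI^[m+1] ρ = 1 := by
      intro m
      induction m with
      | zero => simpa using oscAPI_mem ρ
      | succ k ih =>
        rw [Function.iterate_succ_apply']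
        exact (oscAPI_swap ih).2
    refine ⟨key n, ?_⟩
    rw [show n + 2 = (n+1) + 1 from rfl, Function.iterate_succ_apply']
    exact (oscAPI_swap (key n)).1
end

section
/- (Proposition 1(i).) Consider a finite episodic MDP and a value-function approximator v̂ : Θ → (S → ℝ) with parameter space Θ = ℝⁿ. Assume that for every deterministic policy π there exists a unique parameter θ*_π ∈ ℝⁿ with ∑_{s∈S} μ_π(s)·(v̂(s;θ*_π) − v_π(s))² = 0. Let θ̃ be a fixed point of approximate policy iteration, i.e., with π = Greedy(θ̃) one has v̂(·;θ̃) = v̂(·;θ*_π). Then θ̃ is also a fixed point of approximate value iteration: θ̃ minimizes over θ ∈ ℝⁿ the objective ∑_{s∈S} μ_π(s)·(v̂(s;θ) − B*v̂(s;θ̃))², with minimum value 0, where π = Greedy(θ̃). -/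
/-!
With `π = Greedy(θ̃)`, the Bellman optimality backup of `v̂(·;θ̃)` is the one-step backup
`r_π + P_π v̂(·;θ̃)`. The API fixed-point condition makes `v̂(·;θ̃)` equal to `v_π` on the support
of `μ_π`, and this support is closed under `P_π` because `μ_π = ν₀ + μ_π P_π` with all terms
nonnegative. So on the support the backup only sees `v_π`, and `v_π = r_π + P_π v_π` gives a zero
residual there; a `μ_π`-weighted squared error of zero is then minimal.
-/

open Matrix BigOperators

/-- Transition matrix of the Markov chain induced by deterministic policy `π`. -/
noncomputable def polMat {S A : Type*} [Fintype S] (p : S → A → S → ℝ) (π : S → A) :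
    Matrix S S ℝ := fun s s' => p s (π s) s'

/-- Expected one-step reward vector of deterministic policy `π`. -/
noncomputable def polRew {S A : Type*} (r : S → A → ℝ) (π : S → A) : S → ℝ :=
  fun s => r s (π s)

/-- True value function of deterministic policy `π`: v_π = (I − P_π)⁻¹ r_π. -/
noncomputable def polVal {S A : Type*} [Fintype S] [DecidableEq S]
    (p : S → A → S → ℝ) (r : S → A → ℝ) (π : S → A) : S → ℝ :=
  (1 - polMat p π)⁻¹ *ᵥ polRew r π

/-- On-policy weights (expected visit counts): μ_π = ν₀ᵀ (I − P_π)⁻¹. -/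
noncomputable def polMu {S A : Type*} [Fintype S] [DecidableEq S]
    (p : S → A → S → ℝ) (ν₀ : S → ℝ) (π : S → A) : S → ℝ :=
  ν₀ ᵥ* (1 - polMat p π)⁻¹

/-- Bellman optimality operator: B*v(s) = max_a [r(s,a) + Σ_{s'} p(s'|s,a) v(s')]. -/
noncomputable def bellOpt {S A : Type*} [Fintype S] [Fintype A] [Nonempty A]
    (p : S → A → S → ℝ) (r : S → A → ℝ) (v : S → ℝ) : S → ℝ :=
  fun s => ⨆ a : A, (r s a + ∑ s', p s a s' * v s')

theorem sum_mul_sq_sub_eq_zero_iff {ι R : Type*} [Fintype ι] [Ring R] [LinearOrder R]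
    [IsStrictOrderedRing R] {μ f g : ι → R} (hμ : ∀ i, 0 ≤ μ i) :
    ∑ i, μ i * (f i - g i) ^ 2 = 0 ↔ ∀ i, μ i ≠ 0 → f i = g i := by
  rw [Finset.sum_eq_zero_iff_of_nonneg fun i _ => mul_nonneg (hμ i) (sq_nonneg _)]
  simp only [Finset.mem_univ, true_implies, mul_eq_zero, sq_eq_zero_iff, sub_eq_zero,
    or_iff_not_imp_left]

namespace Matrix

variable {ι R : Type*} [Fintype ι] [DecidableEq ι]

theorem apply_nonneg_of_hasSum_pow [Semiring R] [PartialOrder R] [IsOrderedRing R]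
    [TopologicalSpace R] [OrderClosedTopology R] {M N : Matrix ι ι R} (hM : ∀ i j, 0 ≤ M i j)
    (h : HasSum (fun t : ℕ => M ^ t) N) (i j : ι) : 0 ≤ N i j :=
  (Pi.hasSum.mp (Pi.hasSum.mp h i) j).nonneg fun t => pow_apply_nonneg hM t i j

variable [CommRing R] [LinearOrder R] [IsStrictOrderedRing R]

theorem apply_eq_zero_of_vecMul_one_sub_eq {P : Matrix ι ι R} {μ ν : ι → R}
    (hP : ∀ i j, 0 ≤ P i j) (hμ : ∀ i, 0 ≤ μ i) (hν : ∀ i, 0 ≤ ν i) (h : μ ᵥ* (1 - P) = ν)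
    {i j : ι} (hi : μ i ≠ 0) (hj : μ j = 0) : P i j = 0 := by
  have hμj : μ j = ν j + ∑ k, μ k * P k j := by
    have hj' := congrFun h j
    rw [vecMul_sub, vecMul_one, Pi.sub_apply] at hj'
    change μ j - ∑ k, μ k * P k j = ν j at hj'
    linarith
  have hle : μ i * P i j ≤ ∑ k, μ k * P k j :=
    Finset.single_le_sum (f := fun k => μ k * P k j) (fun k _ => mul_nonneg (hμ k) (hP k j))
      (Finset.mem_univ i)
  have hzero : μ i * P i j = 0 :=
    le_antisymm (by linarith [hν j]) (mul_nonneg (hμ i) (hP i j))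
  exact (mul_eq_zero.mp hzero).resolve_left hi

theorem mulVec_apply_eq_of_vecMul_one_sub_eq {P : Matrix ι ι R} {μ ν v w : ι → R}
    (hP : ∀ i j, 0 ≤ P i j) (hμ : ∀ i, 0 ≤ μ i) (hν : ∀ i, 0 ≤ ν i) (h : μ ᵥ* (1 - P) = ν)
    (hvw : ∀ j, μ j ≠ 0 → v j = w j) {i : ι} (hi : μ i ≠ 0) : (P *ᵥ v) i = (P *ᵥ w) i := by
  refine Finset.sum_congr rfl fun j _ => ?_
  by_cases hj : μ j = 0
  · simp only [apply_eq_zero_of_vecMul_one_sub_eq hP hμ hν h hi hj, zero_mul]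
  · rw [hvw j hj]

end Matrix

section MDP

variable {S A : Type*} [Fintype S] {p : S → A → S → ℝ} {π : S → A}

theorem polMat_apply_nonneg (hp : ∀ s a s', 0 ≤ p s a s') (s s' : S) : 0 ≤ polMat p π s s' :=
  hp s (π s) s'

theorem bellOpt_eq_of_greedy [Fintype A] [Nonempty A] {r : S → A → ℝ} {v : S → ℝ}
    (hgreedy : ∀ s a, r s a + ∑ s', p s a s' * v s' ≤ r s (π s) + ∑ s', p s (π s) s' * v s') :
    bellOpt p r v = polRew r π + polMat p π *ᵥ v :=
  funext fun s => le_antisymm (ciSup_le (hgreedy s))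
    (le_ciSup (f := fun a => r s a + ∑ s', p s a s' * v s') (Set.finite_range _).bddAbove (π s))

variable [DecidableEq S]

theorem polMu_nonneg {ν₀ : S → ℝ} (hp : ∀ s a s', 0 ≤ p s a s') (hν₀ : ∀ s, 0 ≤ ν₀ s)
    (htrans : HasSum (fun t : ℕ => polMat p π ^ t) (1 - polMat p π)⁻¹) (s : S) :
    0 ≤ polMu p ν₀ π s :=
  Finset.sum_nonneg fun t _ =>
    mul_nonneg (hν₀ t) (apply_nonneg_of_hasSum_pow (polMat_apply_nonneg hp) htrans t s)

theorem polMu_vecMul_one_sub (ν₀ : S → ℝ) (hunit : IsUnit (1 - polMat p π)) :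
    polMu p ν₀ π ᵥ* (1 - polMat p π) = ν₀ := by
  rw [polMu, vecMul_vecMul, nonsing_inv_mul _ ((isUnit_iff_isUnit_det _).mp hunit), vecMul_one]

theorem polVal_eq_polRew_add (r : S → A → ℝ) (hunit : IsUnit (1 - polMat p π)) :
    polVal p r π = polRew r π + polMat p π *ᵥ polVal p r π := by
  have h : (1 - polMat p π) *ᵥ polVal p r π = polRew r π := by
    rw [polVal, mulVec_mulVec, mul_nonsing_inv _ ((isUnit_iff_isUnit_det _).mp hunit),
      one_mulVec]
  rw [sub_mulVec, one_mulVec] at h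
  exact sub_eq_iff_eq_add.mp h

end MDP

theorem api_fixed_point_is_avi_fixed_point_general
    {S A : Type*} [Fintype S] [Fintype A] [DecidableEq S] [Nonempty A]
    (n : ℕ) (p : S → A → S → ℝ) (r : S → A → ℝ) (ν₀ : S → ℝ)
    (hp_nonneg : ∀ s a s', 0 ≤ p s a s')
    (hν₀_nonneg : ∀ s, 0 ≤ ν₀ s)
    (hunit : ∀ π : S → A, IsUnit (1 - polMat p π))
    (htrans : ∀ π : S → A, HasSum (fun t : ℕ => polMat p π ^ t) (1 - polMat p π)⁻¹)
    (vhat : (Fin n → ℝ) → S → ℝ)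
    (θtil : Fin n → ℝ) (π : S → A)
    (hgreedy : ∀ s a, r s a + ∑ s', p s a s' * vhat θtil s'
      ≤ r s (π s) + ∑ s', p s (π s) s' * vhat θtil s')
    (hfix : ∃ θstar : Fin n → ℝ,
      (∑ s, polMu p ν₀ π s * (vhat θstar s - polVal p r π s) ^ 2 = 0) ∧
      vhat θtil = vhat θstar) :
    (∑ s, polMu p ν₀ π s * (vhat θtil s - bellOpt p r (vhat θtil) s) ^ 2 = 0) ∧
    (∀ θ : Fin n → ℝ,
      ∑ s, polMu p ν₀ π s * (vhat θtil s - bellOpt p r (vhat θtil) s) ^ 2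
        ≤ ∑ s, polMu p ν₀ π s * (vhat θ s - bellOpt p r (vhat θtil) s) ^ 2) := by
  obtain ⟨θstar, hθstar, hvθ⟩ := hfix
  have hμ := polMu_nonneg hp_nonneg hν₀_nonneg (htrans π)
  have hμP := polMu_vecMul_one_sub ν₀ (hunit π)
  have hfit : ∀ s, polMu p ν₀ π s ≠ 0 → vhat θtil s = polVal p r π s := by
    rw [hvθ]
    exact (sum_mul_sq_sub_eq_zero_iff hμ).mp hθstar
  have hresidual : ∀ s, polMu p ν₀ π s ≠ 0 → vhat θtil s = bellOpt p r (vhat θtil) s := by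
    intro s hs
    rw [bellOpt_eq_of_greedy hgreedy, hfit s hs, polVal_eq_polRew_add r (hunit π), Pi.add_apply,
      Pi.add_apply, mulVec_apply_eq_of_vecMul_one_sub_eq (polMat_apply_nonneg hp_nonneg) hμ
        hν₀_nonneg hμP (fun s' hs' => (hfit s' hs').symm) hs]
  have hzero := (sum_mul_sq_sub_eq_zero_iff hμ).mpr hresidual
  exact ⟨hzero, fun θ => hzero ▸ Finset.sum_nonneg fun s _ => mul_nonneg (hμ s) (sq_nonneg _)⟩

/-- Proposition 1(i): in a finite episodic MDP in which, for each deterministic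
policy, there is a unique parameter achieving zero on-policy weighted evaluation
error, every fixed point of approximate policy iteration is also a fixed point of
approximate value iteration. -/
theorem api_fixed_point_is_avi_fixed_point
    {S A : Type*} [Fintype S] [Fintype A] [DecidableEq S] [Nonempty A]
    (n : ℕ) (p : S → A → S → ℝ) (r : S → A → ℝ) (ν₀ : S → ℝ)
    (hp_nonneg : ∀ s a s', 0 ≤ p s a s')
    (hp_sub : ∀ s a, ∑ s', p s a s' ≤ 1)
    (hν₀_nonneg : ∀ s, 0 ≤ ν₀ s) (hν₀_sum : ∑ s, ν₀ s = 1)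
    (hunit : ∀ π : S → A, IsUnit (1 - polMat p π))
    (htrans : ∀ π : S → A, HasSum (fun t : ℕ => polMat p π ^ t) (1 - polMat p π)⁻¹)
    (vhat : (Fin n → ℝ) → S → ℝ)
    (hzero : ∀ π : S → A, ∃! θ : Fin n → ℝ,
      ∑ s, polMu p ν₀ π s * (vhat θ s - polVal p r π s) ^ 2 = 0)
    (θtil : Fin n → ℝ) (π : S → A)
    (hgreedy : ∀ s a, r s a + ∑ s', p s a s' * vhat θtil s'
      ≤ r s (π s) + ∑ s', p s (π s) s' * vhat θtil s')
    (hfix : ∃ θstar : Fin n → ℝ,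
      (∑ s, polMu p ν₀ π s * (vhat θstar s - polVal p r π s) ^ 2 = 0) ∧
      vhat θtil = vhat θstar) :
    (∑ s, polMu p ν₀ π s * (vhat θtil s - bellOpt p r (vhat θtil) s) ^ 2 = 0) ∧
    (∀ θ : Fin n → ℝ,
      ∑ s, polMu p ν₀ π s * (vhat θtil s - bellOpt p r (vhat θtil) s) ^ 2
        ≤ ∑ s, polMu p ν₀ π s * (vhat θ s - bellOpt p r (vhat θtil) s) ^ 2) :=
  api_fixed_point_is_avi_fixed_point_general n p r ν₀ hp_nonneg hν₀_nonneg hunit htrans vhat θtil π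
    hgreedy hfix
end

section
/- Let P be an n×n row-stochastic matrix with stationary distribution μ ∈ ℝⁿ whose entries are all strictly positive, let γ ∈ [0,1), let r ∈ ℝⁿ, let V ⊆ ℝⁿ be a linear subspace, and let Π : ℝⁿ → V be the orthogonal projection onto V with respect to the inner product ⟨u,v⟩_μ = ∑_i μ_i u_i v_i. Then the map T : ℝⁿ → ℝⁿ defined by T(v) = Π(r + γ·Pv) satisfies ‖T(v) − T(w)‖_μ ≤ γ·‖v − w‖_μ for all v, w ∈ ℝⁿ, where ‖v‖_μ = (∑_i μ_i v_i²)^{1/2}. -/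
/-!
The projection is orthogonal for the μ-weighted inner product, so by Pythagoras it does not
increase the μ-norm. The transition matrix does not increase it either: Jensen's inequality
bounds `(P x)ᵢ²` by `(P x²)ᵢ`, and stationarity of `μ` turns `∑ μᵢ (P x²)ᵢ` back into
`∑ μᵢ xᵢ²`. The factor `γ` then gives the contraction.
-/

open Matrix BigOperators

section WeightedSqNorm

variable {ι : Type*} [Fintype ι] {μ : ι → ℝ}

def weightedSqNorm (μ : ι → ℝ) (x : ι → ℝ) : ℝ := ∑ i, μ i * x i ^ 2

lemma weightedSqNorm_nonneg (hμ : ∀ i, 0 ≤ μ i) (x : ι → ℝ) : 0 ≤ weightedSqNorm μ x :=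
  Finset.sum_nonneg fun i _ => mul_nonneg (hμ i) (sq_nonneg _)

lemma weightedSqNorm_smul (c : ℝ) (x : ι → ℝ) :
    weightedSqNorm μ (c • x) = c ^ 2 * weightedSqNorm μ x := by
  simp only [weightedSqNorm, Finset.mul_sum, Pi.smul_apply, smul_eq_mul]
  exact Finset.sum_congr rfl fun i _ => by ring

lemma weightedSqNorm_eq_add_of_orthogonal {d p : ι → ℝ}
    (horth : ∑ i, μ i * (d i - p i) * p i = 0) :
    weightedSqNorm μ d = weightedSqNorm μ p + weightedSqNorm μ (d - p) := by
  have hexpand : weightedSqNorm μ d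
      = weightedSqNorm μ p + weightedSqNorm μ (d - p) + 2 * ∑ i, μ i * (d i - p i) * p i := by
    simp only [weightedSqNorm, Finset.mul_sum, ← Finset.sum_add_distrib, Pi.sub_apply]
    exact Finset.sum_congr rfl fun i _ => by ring
  rw [hexpand, horth, mul_zero, add_zero]

lemma weightedSqNorm_proj_sub_le (hμ : ∀ i, 0 ≤ μ i) {V : Submodule ℝ (ι → ℝ)}
    {proj : (ι → ℝ) → ι → ℝ} (hproj_mem : ∀ v, proj v ∈ V)
    (hproj_orth : ∀ v, ∀ w ∈ V, ∑ i, μ i * (v i - proj v i) * w i = 0) (a b : ι → ℝ) :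
    weightedSqNorm μ (proj a - proj b) ≤ weightedSqNorm μ (a - b) := by
  set p := proj a - proj b
  have hp : p ∈ V := V.sub_mem (hproj_mem a) (hproj_mem b)
  have horth : ∑ i, μ i * ((a - b) i - p i) * p i = 0 := by
    have hsplit : ∑ i, μ i * ((a - b) i - p i) * p i
        = ∑ i, μ i * (a i - proj a i) * p i - ∑ i, μ i * (b i - proj b i) * p i := by
      rw [← Finset.sum_sub_distrib]
      exact Finset.sum_congr rfl fun i _ => by simp only [p, Pi.sub_apply]; ring
    rw [hsplit, hproj_orth a p hp, hproj_orth b p hp, sub_zero]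
  rw [weightedSqNorm_eq_add_of_orthogonal horth]
  exact le_add_of_nonneg_right (weightedSqNorm_nonneg hμ _)

variable [DecidableEq ι] {P : Matrix ι ι ℝ}

lemma sq_mulVec_le_mulVec_sq (hP : P ∈ rowStochastic ℝ ι) (x : ι → ℝ) (i : ι) :
    (P *ᵥ x) i ^ 2 ≤ (P *ᵥ fun j => x j ^ 2) i := by
  have hrow := mem_rowStochastic_iff_sum.1 hP
  simpa only [mulVec, dotProduct, smul_eq_mul] using
    (even_two.convexOn_pow (𝕜 := ℝ)).map_sum_le (t := Finset.univ) (w := P i) (p := x)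
      (fun j _ => hrow.1 i j) (hrow.2 i) (fun j _ => Set.mem_univ (x j))

lemma weightedSqNorm_mulVec_le (hμ : ∀ i, 0 ≤ μ i) (hP : P ∈ rowStochastic ℝ ι)
    (hstat : μ ᵥ* P = μ) (x : ι → ℝ) :
    weightedSqNorm μ (P *ᵥ x) ≤ weightedSqNorm μ x :=
  calc weightedSqNorm μ (P *ᵥ x)
      ≤ μ ⬝ᵥ (P *ᵥ fun j => x j ^ 2) :=
        Finset.sum_le_sum fun i _ =>
          mul_le_mul_of_nonneg_left (sq_mulVec_le_mulVec_sq hP x i) (hμ i)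
    _ = weightedSqNorm μ x := by rw [dotProduct_mulVec, hstat]; rfl

end WeightedSqNorm

theorem projected_bellman_operator_contraction_general
    (n : ℕ) (P : Matrix (Fin n) (Fin n) ℝ) (μ : Fin n → ℝ) (γ : ℝ) (r : Fin n → ℝ)
    (V : Submodule ℝ (Fin n → ℝ)) (proj : (Fin n → ℝ) → (Fin n → ℝ))
    (hP_nonneg : ∀ i j, 0 ≤ P i j)
    (hP_row : ∀ i, ∑ j, P i j = 1)
    (hμ_pos : ∀ i, 0 < μ i)
    (hμ_stat : ∀ j, ∑ i, μ i * P i j = μ j)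
    (hγ0 : 0 ≤ γ)
    -- proj is the orthogonal projection onto V w.r.t. ⟨u,v⟩_μ = Σ_i μ_i u_i v_i:
    (hproj_mem : ∀ v, proj v ∈ V)
    (hproj_orth : ∀ v, ∀ w ∈ V, ∑ i, μ i * (v i - proj v i) * w i = 0) :
    ∀ v w : Fin n → ℝ,
      Real.sqrt (∑ i, μ i *
          (proj (r + γ • (P *ᵥ v)) i - proj (r + γ • (P *ᵥ w)) i) ^ 2)
        ≤ γ * Real.sqrt (∑ i, μ i * (v i - w i) ^ 2) := by
  intro v w
  have hμ : ∀ i, 0 ≤ μ i := fun i => (hμ_pos i).le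
  have hP : P ∈ rowStochastic ℝ (Fin n) := mem_rowStochastic_iff_sum.2 ⟨hP_nonneg, hP_row⟩
  have hdiff : r + γ • (P *ᵥ v) - (r + γ • (P *ᵥ w)) = γ • (P *ᵥ (v - w)) := by
    rw [mulVec_sub, smul_sub, add_sub_add_left_eq_sub]
  have hsq : weightedSqNorm μ (proj (r + γ • (P *ᵥ v)) - proj (r + γ • (P *ᵥ w)))
      ≤ γ ^ 2 * weightedSqNorm μ (v - w) :=
    calc _ ≤ weightedSqNorm μ (r + γ • (P *ᵥ v) - (r + γ • (P *ᵥ w))) :=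
          weightedSqNorm_proj_sub_le hμ hproj_mem hproj_orth _ _
      _ = γ ^ 2 * weightedSqNorm μ (P *ᵥ (v - w)) := by rw [hdiff, weightedSqNorm_smul]
      _ ≤ γ ^ 2 * weightedSqNorm μ (v - w) := by
          gcongr
          exact weightedSqNorm_mulVec_le hμ hP (funext hμ_stat) _
  calc _ ≤ Real.sqrt (γ ^ 2 * weightedSqNorm μ (v - w)) := Real.sqrt_le_sqrt hsq
    _ = _ := by rw [Real.sqrt_mul (sq_nonneg γ), Real.sqrt_sq hγ0]; rfl

theorem projected_bellman_operator_contraction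
    (n : ℕ) (P : Matrix (Fin n) (Fin n) ℝ) (μ : Fin n → ℝ) (γ : ℝ) (r : Fin n → ℝ)
    (V : Submodule ℝ (Fin n → ℝ)) (proj : (Fin n → ℝ) → (Fin n → ℝ))
    (hP_nonneg : ∀ i j, 0 ≤ P i j)
    (hP_row : ∀ i, ∑ j, P i j = 1)
    (hμ_pos : ∀ i, 0 < μ i)
    (hμ_sum : ∑ i, μ i = 1)
    (hμ_stat : ∀ j, ∑ i, μ i * P i j = μ j)
    (hγ0 : 0 ≤ γ) (hγ1 : γ < 1)
    -- proj is the orthogonal projection onto V w.r.t. ⟨u,v⟩_μ = Σ_i μ_i u_i v_i: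
    (hproj_mem : ∀ v, proj v ∈ V)
    (hproj_orth : ∀ v, ∀ w ∈ V, ∑ i, μ i * (v i - proj v i) * w i = 0) :
    ∀ v w : Fin n → ℝ,
      Real.sqrt (∑ i, μ i *
          (proj (r + γ • (P *ᵥ v)) i - proj (r + γ • (P *ᵥ w)) i) ^ 2)
        ≤ γ * Real.sqrt (∑ i, μ i * (v i - w i) ^ 2) :=
  projected_bellman_operator_contraction_general n P μ γ r V proj hP_nonneg hP_row hμ_pos hμ_stat
    hγ0 hproj_mem hproj_orth
end

section
/- Let P be an n×n row-stochastic matrix with stationary distribution μ ∈ ℝⁿ whose entries are all strictly positive, let γ ∈ [0,1), let r ∈ ℝⁿ, let V ⊆ ℝⁿ be a linear subspace, and let Π : ℝⁿ → V be the orthogonal projection onto V with respect to the inner product ⟨u,v⟩_μ = ∑_i μ_i u_i v_i. Then the map T(v) = Π(r + γ·Pv) has exactly one fixed point in ℝⁿ, and this fixed point lies in V. -/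
/-!
In the `μ`-weighted norm, `P` is non-expansive (Jensen's inequality on each row, then
stationarity `μ P = μ`), and so is the orthogonal projection `Π` (Pythagoras). Hence
`v ↦ Π (γ P v)` is linear and shrinks the squared norm by `γ²`, so `1 - Π γ P` is injective,
hence bijective in finite dimension, and `T v = Π r + Π (γ P v)` has exactly one fixed point.
Every fixed point is a value of `Π`, so it lies in `V`.
-/

open Matrix Finset

section WeightedInner

variable {ι : Type*} [Fintype ι]

def weightedInner (μ u v : ι → ℝ) : ℝ := ∑ i, μ i * u i * v i

variable {μ : ι → ℝ}

lemma weightedInner_self_nonneg (hμ : ∀ i, 0 ≤ μ i) (v : ι → ℝ) : 0 ≤ weightedInner μ v v :=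
  sum_nonneg fun i _ => by rw [mul_assoc]; exact mul_nonneg (hμ i) (mul_self_nonneg _)

lemma eq_zero_of_weightedInner_self_eq_zero (hμ : ∀ i, 0 < μ i) {v : ι → ℝ}
    (h : weightedInner μ v v = 0) : v = 0 := by
  have hterm := (sum_eq_zero_iff_of_nonneg fun i _ => by
    rw [mul_assoc]; exact mul_nonneg (hμ i).le (mul_self_nonneg (v i))).mp h
  funext i
  simpa [mul_assoc, (hμ i).ne'] using hterm i (mem_univ i)

lemma weightedInner_add_left (μ u v w : ι → ℝ) :
    weightedInner μ (u + v) w = weightedInner μ u w + weightedInner μ v w := by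
  simp only [weightedInner, ← sum_add_distrib, Pi.add_apply]
  exact sum_congr rfl fun i _ => by ring

lemma weightedInner_sub_left (μ u v w : ι → ℝ) :
    weightedInner μ (u - v) w = weightedInner μ u w - weightedInner μ v w := by
  simp only [weightedInner, ← sum_sub_distrib, Pi.sub_apply]
  exact sum_congr rfl fun i _ => by ring

lemma weightedInner_smul_left (μ : ι → ℝ) (c : ℝ) (v w : ι → ℝ) :
    weightedInner μ (c • v) w = c * weightedInner μ v w := by
  simp only [weightedInner, mul_sum, Pi.smul_apply, smul_eq_mul]
  exact sum_congr rfl fun i _ => by ring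

lemma weightedInner_comm (μ v w : ι → ℝ) : weightedInner μ v w = weightedInner μ w v :=
  sum_congr rfl fun i _ => by ring

lemma weightedInner_smul_self (μ : ι → ℝ) (c : ℝ) (v : ι → ℝ) :
    weightedInner μ (c • v) (c • v) = c ^ 2 * weightedInner μ v v := by
  rw [weightedInner_smul_left, weightedInner_comm, weightedInner_smul_left]; ring

lemma weightedInner_add_self (μ v w : ι → ℝ) :
    weightedInner μ (v + w) (v + w) =
      weightedInner μ v v + 2 * weightedInner μ v w + weightedInner μ w w := by
  simp only [weightedInner_add_left, weightedInner_comm μ _ (v + w), weightedInner_comm μ w v]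
  ring

end WeightedInner

lemma sq_mulVec_le_mulVec_sq_s13 {m ι : Type*} [Fintype ι] {P : Matrix m ι ℝ}
    (hP_nonneg : ∀ i j, 0 ≤ P i j) (hP_row : ∀ i, ∑ j, P i j = 1) (v : ι → ℝ) (i : m) :
    (P *ᵥ v) i ^ 2 ≤ (P *ᵥ v ^ 2) i := by
  simpa [mulVec, dotProduct] using
    even_two.convexOn_pow.map_sum_le (t := univ) (w := P i) (p := v)
      (fun j _ => hP_nonneg i j) (hP_row i) (fun j _ => Set.mem_univ _)

lemma weightedInner_mulVec_self_le {ι : Type*} [Fintype ι] {μ : ι → ℝ} {P : Matrix ι ι ℝ}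
    (hP_nonneg : ∀ i j, 0 ≤ P i j) (hP_row : ∀ i, ∑ j, P i j = 1) (hμ : ∀ i, 0 ≤ μ i)
    (hμ_stat : μ ᵥ* P = μ) (v : ι → ℝ) :
    weightedInner μ (P *ᵥ v) (P *ᵥ v) ≤ weightedInner μ v v :=
  calc weightedInner μ (P *ᵥ v) (P *ᵥ v) = μ ⬝ᵥ (P *ᵥ v) ^ 2 :=
        sum_congr rfl fun i _ => by simp [mul_assoc, sq]
    _ ≤ μ ⬝ᵥ (P *ᵥ v ^ 2) :=
        sum_le_sum fun i _ =>
          mul_le_mul_of_nonneg_left (sq_mulVec_le_mulVec_sq_s13 hP_nonneg hP_row v i) (hμ i)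
    _ = μ ⬝ᵥ v ^ 2 := by rw [dotProduct_mulVec, hμ_stat]
    _ = weightedInner μ v v := sum_congr rfl fun i _ => by simp [mul_assoc, sq]

structure IsWeightedOrthogonalProjection {ι : Type*} [Fintype ι] (μ : ι → ℝ)
    (V : Submodule ℝ (ι → ℝ)) (proj : (ι → ℝ) → ι → ℝ) : Prop where
  mem : ∀ v, proj v ∈ V
  orth : ∀ v, ∀ w ∈ V, weightedInner μ (v - proj v) w = 0

namespace IsWeightedOrthogonalProjection

variable {ι : Type*} [Fintype ι] {μ : ι → ℝ} {V : Submodule ℝ (ι → ℝ)} {proj : (ι → ℝ) → ι → ℝ}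

lemma apply_eq (hproj : IsWeightedOrthogonalProjection μ V proj) (hμ : ∀ i, 0 < μ i)
    {v w : ι → ℝ} (hw : w ∈ V) (horth : ∀ x ∈ V, weightedInner μ (v - w) x = 0) :
    proj v = w := by
  have hd : proj v - w ∈ V := V.sub_mem (hproj.mem v) hw
  have h : weightedInner μ ((v - w) - (v - proj v)) (proj v - w) = 0 := by
    rw [weightedInner_sub_left, horth _ hd, hproj.orth _ _ hd, sub_zero]
  rw [sub_sub_sub_cancel_left] at h
  exact sub_eq_zero.mp (eq_zero_of_weightedInner_self_eq_zero hμ h)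

def toLinearMap (hproj : IsWeightedOrthogonalProjection μ V proj) (hμ : ∀ i, 0 < μ i) :
    (ι → ℝ) →ₗ[ℝ] (ι → ℝ) where
  toFun := proj
  map_add' u v := hproj.apply_eq hμ (V.add_mem (hproj.mem u) (hproj.mem v)) fun x hx => by
    rw [add_sub_add_comm, weightedInner_add_left, hproj.orth u x hx, hproj.orth v x hx, add_zero]
  map_smul' c v := hproj.apply_eq hμ (V.smul_mem c (hproj.mem v)) fun x hx => by
    rw [RingHom.id_apply, ← smul_sub, weightedInner_smul_left, hproj.orth v x hx, mul_zero]

lemma weightedInner_apply_self_le (hproj : IsWeightedOrthogonalProjection μ V proj)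
    (hμ : ∀ i, 0 ≤ μ i) (v : ι → ℝ) :
    weightedInner μ (proj v) (proj v) ≤ weightedInner μ v v := by
  have h := weightedInner_add_self μ (v - proj v) (proj v)
  rw [sub_add_cancel, hproj.orth v _ (hproj.mem v)] at h
  linarith [weightedInner_self_nonneg hμ (v - proj v)]

end IsWeightedOrthogonalProjection

lemma existsUnique_add_apply_eq_self {E : Type*} [AddCommGroup E] [Module ℝ E]
    [FiniteDimensional ℝ E] {L : E →ₗ[ℝ] E} (hL : Function.Injective ⇑(1 - L)) (b : E) :
    ∃! v, b + L v = v := by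
  have hbij : Function.Bijective ⇑(1 - L) :=
    ⟨hL, LinearMap.injective_iff_surjective.mp hL⟩
  convert hbij.existsUnique b using 2 with v
  rw [LinearMap.sub_apply, Module.End.one_apply, sub_eq_iff_eq_add, eq_comm]

lemma injective_one_sub_of_weightedInner_le {ι : Type*} [Fintype ι] {μ : ι → ℝ}
    (hμ : ∀ i, 0 < μ i) {L : (ι → ℝ) →ₗ[ℝ] (ι → ℝ)} {c : ℝ} (hc : c < 1)
    (hL : ∀ v, weightedInner μ (L v) (L v) ≤ c * weightedInner μ v v) :
    Function.Injective ⇑(1 - L) := by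
  rw [← LinearMap.ker_eq_bot, LinearMap.ker_eq_bot']
  intro v hv
  have hfix : L v = v := (sub_eq_zero.mp hv).symm
  have hle := hL v
  rw [hfix] at hle
  have hnn := weightedInner_self_nonneg (fun i => (hμ i).le) v
  exact eq_zero_of_weightedInner_self_eq_zero hμ (by nlinarith)

theorem projected_bellman_operator_unique_fixed_point_general
    (n : ℕ) (P : Matrix (Fin n) (Fin n) ℝ) (μ : Fin n → ℝ) (γ : ℝ) (r : Fin n → ℝ)
    (V : Submodule ℝ (Fin n → ℝ)) (proj : (Fin n → ℝ) → (Fin n → ℝ))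
    (hP_nonneg : ∀ i j, 0 ≤ P i j)
    (hP_row : ∀ i, ∑ j, P i j = 1)
    (hμ_pos : ∀ i, 0 < μ i)
    (hμ_stat : ∀ j, ∑ i, μ i * P i j = μ j)
    (hγ0 : 0 ≤ γ) (hγ1 : γ < 1)
    -- proj is the orthogonal projection onto V w.r.t. ⟨u,v⟩_μ = Σ_i μ_i u_i v_i:
    (hproj_mem : ∀ v, proj v ∈ V)
    (hproj_orth : ∀ v, ∀ w ∈ V, ∑ i, μ i * (v i - proj v i) * w i = 0) :
    (∃! v : Fin n → ℝ, proj (r + γ • (P *ᵥ v)) = v) ∧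
    (∀ v : Fin n → ℝ, proj (r + γ • (P *ᵥ v)) = v → v ∈ V) := by
  have hproj : IsWeightedOrthogonalProjection μ V proj := ⟨hproj_mem, hproj_orth⟩
  refine ⟨?_, fun v hv => hv ▸ hproj.mem _⟩
  set L := hproj.toLinearMap hμ_pos ∘ₗ (γ • P.mulVecLin)
  have hL : ∀ v, weightedInner μ (L v) (L v) ≤ γ ^ 2 * weightedInner μ v v := fun v =>
    calc weightedInner μ (L v) (L v) ≤ weightedInner μ (γ • (P *ᵥ v)) (γ • (P *ᵥ v)) :=
          hproj.weightedInner_apply_self_le (fun i => (hμ_pos i).le) _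
      _ = γ ^ 2 * weightedInner μ (P *ᵥ v) (P *ᵥ v) := weightedInner_smul_self _ _ _
      _ ≤ γ ^ 2 * weightedInner μ v v := by
          gcongr
          exact weightedInner_mulVec_self_le hP_nonneg hP_row (fun i => (hμ_pos i).le)
            (funext hμ_stat) v
  have hT : ∀ v, proj (r + γ • (P *ᵥ v)) = proj r + L v := fun v =>
    (hproj.toLinearMap hμ_pos).map_add r _
  simp_rw [hT]
  exact existsUnique_add_apply_eq_self
    (injective_one_sub_of_weightedInner_le hμ_pos (pow_lt_one₀ hγ0 hγ1 two_ne_zero) hL) (proj r)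

theorem projected_bellman_operator_unique_fixed_point
    (n : ℕ) (P : Matrix (Fin n) (Fin n) ℝ) (μ : Fin n → ℝ) (γ : ℝ) (r : Fin n → ℝ)
    (V : Submodule ℝ (Fin n → ℝ)) (proj : (Fin n → ℝ) → (Fin n → ℝ))
    (hP_nonneg : ∀ i j, 0 ≤ P i j)
    (hP_row : ∀ i, ∑ j, P i j = 1)
    (hμ_pos : ∀ i, 0 < μ i)
    (hμ_sum : ∑ i, μ i = 1)
    (hμ_stat : ∀ j, ∑ i, μ i * P i j = μ j)
    (hγ0 : 0 ≤ γ) (hγ1 : γ < 1)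
    -- proj is the orthogonal projection onto V w.r.t. ⟨u,v⟩_μ = Σ_i μ_i u_i v_i:
    (hproj_mem : ∀ v, proj v ∈ V)
    (hproj_orth : ∀ v, ∀ w ∈ V, ∑ i, μ i * (v i - proj v i) * w i = 0) :
    (∃! v : Fin n → ℝ, proj (r + γ • (P *ᵥ v)) = v) ∧
    (∀ v : Fin n → ℝ, proj (r + γ • (P *ᵥ v)) = v → v ∈ V) :=
  projected_bellman_operator_unique_fixed_point_general n P μ γ r V proj hP_nonneg hP_row hμ_pos
    hμ_stat hγ0 hγ1 hproj_mem hproj_orth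
end
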